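/- arXiv:1810.06809 — 4 statements merged into one kernel-verified Lean document; each statement's English description precedes it below -/
import Mathlib

section
/- Let (N, M, E) be a bipartite graph with finite disjoint vertex sets N, M and edges E ⊆ N × M, and let (𝒩, ℳ) be a maximal half isolated (MHI) biclique. Then at least one of the following holds: (a) I(m) = 𝒩 for every m ∈ ℳ and ℳ = {m ∈ M : I(m) = 𝒩}; or (b) H(n) = ℳ for every n ∈ 𝒩 and 𝒩 = {n ∈ N : H(n) = ℳ}. -/
/-- `I' E m` is the neighborhood `I(m) = {n : (n, m) ∈ E}` of a target node `m`. -/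
def I' {α β : Type*} [DecidableEq α] [DecidableEq β] (E : Finset (α × β)) (m : β) :
    Finset α := (E.filter fun e => e.2 = m).image Prod.fst

/-- `H' E n` is the neighborhood `H(n) = {m : (n, m) ∈ E}` of a source node `n`. -/
def H' {α β : Type*} [DecidableEq α] [DecidableEq β] (E : Finset (α × β)) (n : α) :
    Finset β := (E.filter fun e => e.1 = n).image Prod.snd

/-- `(S, T)` is a half isolated (HI) biclique in the bipartite graph `(N, M, E)`:
`S ⊆ N` and `T ⊆ M` are nonempty, every pair in `S × T` is an edge, and at least one
of the two sides is isolated. -/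
def IsHIBiclique {α β : Type*} [DecidableEq α] [DecidableEq β]
    (N : Finset α) (M : Finset β) (E : Finset (α × β))
    (S : Finset α) (T : Finset β) : Prop :=
  S ⊆ N ∧ T ⊆ M ∧ S.Nonempty ∧ T.Nonempty ∧
    (∀ n ∈ S, ∀ m ∈ T, (n, m) ∈ E) ∧
    ((∀ m ∈ T, I' E m ⊆ S) ∨ (∀ n ∈ S, H' E n ⊆ T))

/-- `(S, T)` is a maximal half isolated (MHI) biclique: an HI biclique not strictly
contained in any HI biclique. -/
def IsMHIBiclique {α β : Type*} [DecidableEq α] [DecidableEq β]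
    (N : Finset α) (M : Finset β) (E : Finset (α × β))
    (S : Finset α) (T : Finset β) : Prop :=
  IsHIBiclique N M E S T ∧
    ∀ S₁ T₁, IsHIBiclique N M E S₁ T₁ → S ⊆ S₁ → T ⊆ T₁ → (S₁, T₁) = (S, T)


lemma mem_I' {α β : Type*} [DecidableEq α] [DecidableEq β] (E : Finset (α × β))
    (m : β) (n : α) : n ∈ I' E m ↔ (n, m) ∈ E := by
  simp only [I', Finset.mem_image, Finset.mem_filter]
  constructor
  · rintro ⟨⟨a, b⟩, ⟨hab, rfl⟩, rfl⟩; exact hab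
  · intro h; exact ⟨(n, m), ⟨h, rfl⟩, rfl⟩

lemma mem_H' {α β : Type*} [DecidableEq α] [DecidableEq β] (E : Finset (α × β))
    (n : α) (m : β) : m ∈ H' E n ↔ (n, m) ∈ E := by
  simp only [H', Finset.mem_image, Finset.mem_filter]
  constructor
  · rintro ⟨⟨a, b⟩, ⟨hab, rfl⟩, rfl⟩; exact hab
  · intro h; exact ⟨(n, m), ⟨h, rfl⟩, rfl⟩

/-- an MHI biclique `(𝒩, ℳ)` satisfies (a) `I(m) = 𝒩` on `ℳ` and
`ℳ = {m ∈ M : I(m) = 𝒩}`, or (b) `H(n) = ℳ` on `𝒩` and `𝒩 = {n ∈ N : H(n) = ℳ}`. -/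
theorem stmt7 {α β : Type*} [DecidableEq α] [DecidableEq β]
    (N : Finset α) (M : Finset β) (E : Finset (α × β)) (hE : E ⊆ N ×ˢ M)
    (S : Finset α) (T : Finset β)
    (hMHI : IsMHIBiclique N M E S T) :
    ((∀ m ∈ T, I' E m = S) ∧ T = M.filter (fun m => I' E m = S)) ∨
      ((∀ n ∈ S, H' E n = T) ∧ S = N.filter (fun n => H' E n = T)) := by
  obtain ⟨⟨hSN, hTM, hSne, hTne, hedge, hiso⟩, hmax⟩ := hMHI
  rcases hiso with hI | hH
  · left
    have hIeq : ∀ m ∈ T, I' E m = S := by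
      intro m hm
      apply Finset.Subset.antisymm (hI m hm)
      intro n hn
      exact (mem_I' E m n).mpr (hedge n hn m hm)
    refine ⟨hIeq, ?_⟩
    set T₁ := M.filter (fun m => I' E m = S) with hT₁
    have hTT₁ : T ⊆ T₁ := by
      intro m hm
      exact Finset.mem_filter.mpr ⟨hTM hm, hIeq m hm⟩
    have hHI : IsHIBiclique N M E S T₁ := by
      refine ⟨hSN, Finset.filter_subset _ _, hSne, hTne.mono hTT₁, ?_, Or.inl ?_⟩
      · intro n hn m hm
        have := (Finset.mem_filter.mp hm).2
        exact (mem_I' E m n).mp (this ▸ hn)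
      · intro m hm
        exact ((Finset.mem_filter.mp hm).2).le
    have := hmax S T₁ hHI (le_refl _) hTT₁
    exact (Prod.mk.injEq _ _ _ _ ▸ this).2.symm
  · right
    have hHeq : ∀ n ∈ S, H' E n = T := by
      intro n hn
      apply Finset.Subset.antisymm (hH n hn)
      intro m hm
      exact (mem_H' E n m).mpr (hedge n hn m hm)
    refine ⟨hHeq, ?_⟩
    set S₁ := N.filter (fun n => H' E n = T) with hS₁
    have hSS₁ : S ⊆ S₁ := by
      intro n hn
      exact Finset.mem_filter.mpr ⟨hSN hn, hHeq n hn⟩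
    have hHI : IsHIBiclique N M E S₁ T := by
      refine ⟨Finset.filter_subset _ _, hTM, hSne.mono hSS₁, hTne, ?_, Or.inr ?_⟩
      · intro n hn m hm
        have := (Finset.mem_filter.mp hn).2
        exact (mem_H' E n m).mp (this ▸ hm)
      · intro n hn
        exact ((Finset.mem_filter.mp hn).2).le
    have := hmax S₁ T hHI hSS₁ (le_refl _)
    exact (Prod.mk.injEq _ _ _ _ ▸ this).1.symm
end

section
/- Let (N, M, E) be a bipartite graph with finite disjoint vertex sets N, M and edges E ⊆ N × M, and let 𝒩 ⊆ N be nonempty with ℳ = {m ∈ M : I(m) = 𝒩} nonempty. If there is no biclique (𝒩₁, ℳ₁) whose 𝒩-side is isolated such that 𝒩 ⊆ 𝒩₁, ℳ ⊆ ℳ₁ and (𝒩₁, ℳ₁) ≠ (𝒩, ℳ), then (𝒩, ℳ) is a maximal half isolated (MHI) biclique. -/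
/-- if `ℳ = {m ∈ M : I(m) = 𝒩}` is nonempty and there is no biclique with
isolated `𝒩`-side strictly containing `(𝒩, ℳ)`, then `(𝒩, ℳ)` is an MHI biclique. -/
theorem stmt8 {α β : Type*} [DecidableEq α] [DecidableEq β]
    (N : Finset α) (M : Finset β) (E : Finset (α × β)) (hE : E ⊆ N ×ˢ M)
    (S : Finset α) (hSN : S ⊆ N) (hS : S.Nonempty)
    (T : Finset β) (hT : T = M.filter fun m => I' E m = S) (hTne : T.Nonempty)
    (hmax : ¬ ∃ S₁ T₁, S₁ ⊆ N ∧ T₁ ⊆ M ∧ S₁.Nonempty ∧ T₁.Nonempty ∧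
      (∀ n ∈ S₁, ∀ m ∈ T₁, (n, m) ∈ E) ∧ (∀ n ∈ S₁, H' E n ⊆ T₁) ∧
      S ⊆ S₁ ∧ T ⊆ T₁ ∧ (S₁, T₁) ≠ (S, T)) :
    IsMHIBiclique N M E S T := by
  subst hT
  set T := M.filter fun m => I' E m = S with hT
  have hbic : ∀ n ∈ S, ∀ m ∈ T, (n, m) ∈ E := by
    intro n hn m hm
    rw [hT, Finset.mem_filter] at hm
    exact (mem_I' E m n).1 (hm.2 ▸ hn)
  refine ⟨⟨hSN, Finset.filter_subset _ _, hS, hTne, hbic, Or.inl ?_⟩, ?_⟩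
  · intro m hm
    rw [hT, Finset.mem_filter] at hm
    exact hm.2.le
  · rintro S₁ T₁ ⟨hS₁N, hT₁M, hS₁ne, hT₁ne, hb, hiso⟩ hSS₁ hTT₁
    by_contra hne
    rcases hiso with hiso | hiso
    · -- T₁-side isolated: I(m) ⊆ S₁ for all m ∈ T₁, so I(m) = S₁
      have hIm : ∀ m ∈ T₁, I' E m = S₁ := by
        intro m hm
        refine le_antisymm (hiso m hm) ?_
        intro n hn
        exact (mem_I' E m n).2 (hb n hn m hm)
      obtain ⟨m₀, hm₀⟩ := hTne
      have hm₀T₁ := hTT₁ hm₀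
      rw [hT, Finset.mem_filter] at hm₀
      have hS₁S : S₁ = S := by rw [← hIm m₀ hm₀T₁, hm₀.2]
      have hT₁T : T₁ = T := by
        refine le_antisymm ?_ hTT₁
        intro m hm
        rw [hT, Finset.mem_filter]
        exact ⟨hT₁M hm, by rw [hIm m hm, hS₁S]⟩
      exact hne (by rw [hS₁S, hT₁T])
    · exact hmax ⟨S₁, T₁, hS₁N, hT₁M, hS₁ne, hT₁ne, hb, hiso, hSS₁, hTT₁, hne⟩
end

section
/- Theorem 2 (S-tree path of an isolated biclique, stated via sorted neighbor lists): let (N, M, E) be a bipartite graph with finite disjoint vertex sets N, M and edges E ⊆ N × M, fix a linear order on N, and for m ∈ M let L(m) be the list of elements of I(m) sorted by that order. Suppose (𝒩, ℳ) is an isolated biclique (a biclique with both sides isolated), 𝒩, ℳ nonempty, and let p be the sorted list of the elements of 𝒩. Then L(m) = p for every m ∈ ℳ, and moreover ℳ = {m ∈ M : p is a prefix of L(m)} = {m ∈ M : L(m) = p}; in particular p is not a proper prefix of L(m) for any m ∈ M. -/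
/-- Theorem 2, via sorted neighbor lists: for an isolated biclique
`(𝒩, ℳ)`, with `L m` the sorted list of `I(m)` and `p` the sorted list of `𝒩`,
we have `L m = p` for all `m ∈ ℳ`, and
`ℳ = {m ∈ M : p <+: L m} = {m ∈ M : L m = p}`; in particular `p` is not a proper
prefix of `L m` for any `m ∈ M`. -/
theorem stmt13 {α β : Type*} [LinearOrder α] [DecidableEq β]
    (N : Finset α) (M : Finset β) (E : Finset (α × β)) (hE : E ⊆ N ×ˢ M)
    (S : Finset α) (T : Finset β) (hSN : S ⊆ N) (hTM : T ⊆ M)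
    (hS : S.Nonempty) (hT : T.Nonempty)
    (hbi : ∀ n ∈ S, ∀ m ∈ T, (n, m) ∈ E)
    (hisoM : ∀ m ∈ T, I' E m ⊆ S) (hisoN : ∀ n ∈ S, H' E n ⊆ T) :
    (∀ m ∈ T, (I' E m).sort (· ≤ ·) = S.sort (· ≤ ·)) ∧
      T = M.filter (fun m => S.sort (· ≤ ·) <+: (I' E m).sort (· ≤ ·)) ∧
      T = M.filter (fun m => (I' E m).sort (· ≤ ·) = S.sort (· ≤ ·)) ∧
      ∀ m ∈ M, ¬(S.sort (· ≤ ·) <+: (I' E m).sort (· ≤ ·) ∧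
        (I' E m).sort (· ≤ ·) ≠ S.sort (· ≤ ·)) := by
  classical
  have hmemI : ∀ (m : β) (a : α), a ∈ I' E m ↔ (a, m) ∈ E := by
    intro m a
    simp [I', Finset.mem_image, Finset.mem_filter]
  have hmemH : ∀ (n : α) (m : β), m ∈ H' E n ↔ (n, m) ∈ E := by
    intro n m
    simp [H', Finset.mem_image, Finset.mem_filter]
  have hIeq : ∀ m ∈ T, I' E m = S := by
    intro m hm
    apply Finset.Subset.antisymm (hisoM m hm)
    intro n hn
    exact (hmemI m n).2 (hbi n hn m hm)
  have h1 : ∀ m ∈ T, (I' E m).sort (· ≤ ·) = S.sort (· ≤ ·) := by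
    intro m hm; rw [hIeq m hm]
  -- prefix implies membership in T
  have hpref : ∀ m ∈ M, (S.sort (· ≤ ·) <+: (I' E m).sort (· ≤ ·)) → m ∈ T := by
    intro m _ hp
    obtain ⟨n, hn⟩ := hS
    have hnL : n ∈ (I' E m).sort (· ≤ ·) := by
      exact hp.sublist.mem ((Finset.mem_sort _).2 hn)
    have hnI : n ∈ I' E m := (Finset.mem_sort _).1 hnL
    have hEnm : (n, m) ∈ E := (hmemI m n).1 hnI
    exact hisoN n hn ((hmemH n m).2 hEnm)
  refine ⟨h1, ?_, ?_, ?_⟩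
  · ext m
    simp only [Finset.mem_filter]
    constructor
    · intro hm; exact ⟨hTM hm, by rw [h1 m hm]⟩
    · rintro ⟨hmM, hp⟩; exact hpref m hmM hp
  · ext m
    simp only [Finset.mem_filter]
    constructor
    · intro hm; exact ⟨hTM hm, h1 m hm⟩
    · rintro ⟨hmM, hp⟩; exact hpref m hmM (hp ▸ List.prefix_refl _)
  · rintro m hm ⟨hp, hne⟩
    exact hne (h1 m (hpref m hm hp))
end

section
/- Theorem 3 (S-tree paths of maximal ℳ-side-isolated bicliques, stated via sorted neighbor lists): let (N, M, E) be a bipartite graph with finite disjoint vertex sets N, M and edges E ⊆ N × M, fix a linear order on N, and for m ∈ M let L(m) be the list of elements of I(m) sorted by that order. (i) For any nonempty 𝒩 ⊆ N with sorted list p, if ℳ = {m ∈ M : L(m) = p} is nonempty, then (𝒩, ℳ) is a biclique whose ℳ-side is isolated and which is maximal among such bicliques (no ℳ-side-isolated biclique strictly contains it). (ii) Conversely, if (𝒩, ℳ) is a maximal biclique with ℳ-side isolated and p is the sorted list of 𝒩, then ℳ = {m ∈ M : L(m) = p}. -/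
private lemma mem_I'_aux {α β : Type*} [DecidableEq α] [DecidableEq β] {E : Finset (α × β)}
    {m : β} {n : α} : n ∈ I' E m ↔ (n, m) ∈ E := by
  simp only [I', Finset.mem_image, Finset.mem_filter, Prod.exists]
  constructor
  · rintro ⟨a, b, ⟨h, rfl⟩, rfl⟩; exact h
  · intro h; exact ⟨n, m, ⟨h, rfl⟩, rfl⟩

private lemma sort_eq_iff_aux {α : Type*} [LinearOrder α] {a b : Finset α} :
    a.sort (· ≤ ·) = b.sort (· ≤ ·) ↔ a = b := by
  constructor
  · intro h; ext x; rw [← Finset.mem_sort (α := α) (· ≤ ·), h, Finset.mem_sort]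
  · rintro rfl; rfl

/-- STATEMENT 14 (Theorem 3, via sorted neighbor lists), where `L m` is the sorted list
of `I(m)` and `p` the sorted list of `𝒩`:
(i) if `ℳ = {m ∈ M : L m = p}` is nonempty, then `(𝒩, ℳ)` is a biclique with isolated
`ℳ`-side, maximal among such bicliques;
(ii) conversely, any maximal biclique with isolated `ℳ`-side satisfies
`ℳ = {m ∈ M : L m = p}`. -/
theorem stmt14 {α β : Type*} [LinearOrder α] [DecidableEq β]
    (N : Finset α) (M : Finset β) (E : Finset (α × β)) (hE : E ⊆ N ×ˢ M) :
    (∀ S : Finset α, S ⊆ N → S.Nonempty →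
      ∀ T : Finset β,
        T = M.filter (fun m => (I' E m).sort (· ≤ ·) = S.sort (· ≤ ·)) → T.Nonempty →
        (∀ n ∈ S, ∀ m ∈ T, (n, m) ∈ E) ∧ (∀ m ∈ T, I' E m ⊆ S) ∧
          (∀ S₁ T₁, S₁ ⊆ N → T₁ ⊆ M → S₁.Nonempty → T₁.Nonempty →
            (∀ n ∈ S₁, ∀ m ∈ T₁, (n, m) ∈ E) → (∀ m ∈ T₁, I' E m ⊆ S₁) →
            S ⊆ S₁ → T ⊆ T₁ → S₁ = S ∧ T₁ = T)) ∧
    (∀ S : Finset α, ∀ T : Finset β, S ⊆ N → T ⊆ M → S.Nonempty → T.Nonempty →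
      (∀ n ∈ S, ∀ m ∈ T, (n, m) ∈ E) → (∀ m ∈ T, I' E m ⊆ S) →
      (∀ S₁ T₁, S₁ ⊆ N → T₁ ⊆ M → S₁.Nonempty → T₁.Nonempty →
        (∀ n ∈ S₁, ∀ m ∈ T₁, (n, m) ∈ E) → (∀ m ∈ T₁, I' E m ⊆ S₁) →
        S ⊆ S₁ → T ⊆ T₁ → S₁ = S ∧ T₁ = T) →
      T = M.filter (fun m => (I' E m).sort (· ≤ ·) = S.sort (· ≤ ·))) := by

  constructor
  · intro S hSN hSne T hT hTne
    have hmemT : ∀ m, m ∈ T ↔ m ∈ M ∧ I' E m = S := by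
      intro m; rw [hT, Finset.mem_filter, sort_eq_iff_aux]
    refine ⟨?_, ?_, ?_⟩
    · intro n hn m hm
      have := ((hmemT m).1 hm).2
      rw [← this] at hn
      exact mem_I'_aux.1 hn
    · intro m hm
      exact Finset.subset_of_eq ((hmemT m).1 hm).2
    · intro S₁ T₁ hS₁N hT₁M hS₁ne hT₁ne hbc hiso hSS₁ hTT₁
      obtain ⟨m₀, hm₀⟩ := hTne
      have hm₀S : I' E m₀ = S := ((hmemT m₀).1 hm₀).2
      have hS₁S : S₁ = S := by
        apply Finset.Subset.antisymm _ hSS₁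
        intro n hn
        have : (n, m₀) ∈ E := hbc n hn m₀ (hTT₁ hm₀)
        rw [← hm₀S]; exact mem_I'_aux.2 this
      refine ⟨hS₁S, Finset.Subset.antisymm ?_ hTT₁⟩
      intro m hm
      rw [hmemT m]
      refine ⟨hT₁M hm, Finset.Subset.antisymm ?_ ?_⟩
      · rw [← hS₁S]; exact hiso m hm
      · intro n hn; exact mem_I'_aux.2 (hbc n (hSS₁ hn) m hm)
  · intro S T hSN hTM hSne hTne hbc hiso hmax
    ext m
    rw [Finset.mem_filter, sort_eq_iff_aux]
    constructor
    · intro hm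
      refine ⟨hTM hm, Finset.Subset.antisymm (hiso m hm) ?_⟩
      intro n hn; exact mem_I'_aux.2 (hbc n hn m hm)
    · rintro ⟨hmM, hIm⟩
      have h := hmax S (insert m T) hSN ?_ hSne (Finset.insert_nonempty _ _) ?_ ?_
        (le_refl S) (Finset.subset_insert _ _)
      · rw [← h.2]; exact Finset.mem_insert_self _ _
      · intro x hx
        rcases Finset.mem_insert.1 hx with rfl | hx
        · exact hmM
        · exact hTM hx
      · intro n hn m' hm'
        rcases Finset.mem_insert.1 hm' with rfl | hm'
        · rw [← hIm] at hn; exact mem_I'_aux.1 hn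
        · exact hbc n hn m' hm'
      · intro m' hm'
        rcases Finset.mem_insert.1 hm' with rfl | hm'
        · exact Finset.subset_of_eq hIm
        · exact hiso m' hm'
end
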